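/- Suppose P is a regular power series method and the Korovkin test hypotheses hold. Then st_P-lim_{j→∞} ( max_{x∈X} |T_j(Q_x)(x)| ) = 0, where Q_x(y) = Σ_{λ=1}^d g_λ(x) ψ_λ(y). -/

import Mathlib

open Filter Topology
open scoped ENNReal

/-- A power series method `P`: a sequence `(s j)` of nonnegative reals with `s 0 > 0`
whose power series `s(t) = ∑ s j * t ^ j` has radius of convergence `R`, `0 < R ≤ ∞`. -/
structure PowerSeriesMethod where
  s : ℕ → ℝ
  s_nonneg : ∀ j, 0 ≤ s j
  s0_pos : 0 < s 0
  R : ℝ≥0∞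
  R_pos : 0 < R
  summable_of_lt : ∀ t : ℝ, 0 < t → ENNReal.ofReal t < R → Summable fun j => s j * t ^ j
  not_summable_of_gt : ∀ t : ℝ, R < ENNReal.ofReal t → ¬ Summable fun j => s j * t ^ j

namespace PowerSeriesMethod

/-- The filter of `t` tending to `R` from the left (through `0 < t < R`);
if `R = ∞` this is `atTop`. -/
noncomputable def limFilter (P : PowerSeriesMethod) : Filter ℝ :=
  if P.R = ⊤ then Filter.atTop else nhdsWithin P.R.toReal (Set.Ioo 0 P.R.toReal)

/-- `s(t) = ∑ s j t ^ j`. -/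
noncomputable def sum (P : PowerSeriesMethod) (t : ℝ) : ℝ := ∑' j, P.s j * t ^ j

/-- The quotient `(∑_{j ∈ E} s j t ^ j) / s(t)` whose limit as `t → R⁻` is the `P`-density. -/
noncomputable def densityFn (P : PowerSeriesMethod) (E : Set ℕ) (t : ℝ) : ℝ :=
  (∑' j, Set.indicator E (fun j => P.s j * t ^ j) j) / P.sum t

/-- `E ⊆ ℕ` has `P`-density `d`. -/
def HasDensity (P : PowerSeriesMethod) (E : Set ℕ) (d : ℝ) : Prop :=
  Tendsto (P.densityFn E) P.limFilter (𝓝 d)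

/-- The power series method `P` is regular. -/
def Regular (P : PowerSeriesMethod) : Prop :=
  ∀ j, Tendsto (fun t => P.s j * t ^ j / P.sum t) P.limFilter (𝓝 0)

/-- The sequence `x` is `P`-statistically convergent to `L`. -/
def StatTendsto (P : PowerSeriesMethod) (x : ℕ → ℝ) (L : ℝ) : Prop :=
  ∀ ε : ℝ, 0 < ε → P.HasDensity {j | ε ≤ |x j - L|} 0

end PowerSeriesMethod

/-!
Since `Q_x(x) = 0`, linearity gives `T_j(Q_x)(x) = ∑ g_λ(x) (T_j ψ_λ - ψ_λ)(x)`, so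
`max_x |T_j(Q_x)(x)| ≤ ∑ ‖g_λ‖ ‖T_j ψ_λ - ψ_λ‖`. The sets of `P`-density zero form an ideal,
so `P`-statistical convergence is convergence along a filter on `ℕ`, and the right-hand side
tends to `0` along it.
-/

namespace PowerSeriesMethod

variable (P : PowerSeriesMethod)

lemma eventually_nonneg_and_summable :
    ∀ᶠ t in P.limFilter, 0 ≤ t ∧ Summable fun j => P.s j * t ^ j := by
  have hsummable : ∀ t : ℝ, 0 < t → ENNReal.ofReal t < P.R →
      0 ≤ t ∧ Summable fun j => P.s j * t ^ j :=
    fun t ht htR => ⟨ht.le, P.summable_of_lt t ht htR⟩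
  unfold limFilter
  split_ifs with hR
  · filter_upwards [eventually_gt_atTop (0 : ℝ)] with t ht
    exact hsummable t ht (by simp [hR])
  · filter_upwards [self_mem_nhdsWithin] with t ht
    exact hsummable t ht.1 ((ENNReal.ofReal_lt_iff_lt_toReal ht.1.le hR).2 ht.2)

variable {P}

lemma term_nonneg {t : ℝ} (ht : 0 ≤ t) (j : ℕ) : 0 ≤ P.s j * t ^ j :=
  mul_nonneg (P.s_nonneg j) (pow_nonneg ht j)

lemma densityFn_nonneg (E : Set ℕ) {t : ℝ} (ht : 0 ≤ t) : 0 ≤ P.densityFn E t :=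
  div_nonneg (tsum_nonneg <| Set.indicator_nonneg fun j _ => term_nonneg ht j)
    (tsum_nonneg <| term_nonneg ht)

lemma densityFn_mono {E F : Set ℕ} (hEF : E ⊆ F) {t : ℝ} (ht : 0 ≤ t)
    (hs : Summable fun j => P.s j * t ^ j) : P.densityFn E t ≤ P.densityFn F t := by
  unfold densityFn
  gcongr ?_ / _
  · exact tsum_nonneg (term_nonneg ht)
  · exact (hs.indicator E).tsum_le_tsum
      (Set.indicator_le_indicator_of_subset hEF (term_nonneg ht)) (hs.indicator F)

lemma densityFn_union_le (E F : Set ℕ) {t : ℝ} (ht : 0 ≤ t)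
    (hs : Summable fun j => P.s j * t ^ j) :
    P.densityFn (E ∪ F) t ≤ P.densityFn E t + P.densityFn F t := by
  unfold densityFn
  rw [← add_div, ← (hs.indicator E).tsum_add (hs.indicator F)]
  gcongr ?_ / _
  · exact tsum_nonneg (term_nonneg ht)
  refine (hs.indicator _).tsum_le_tsum (fun j => ?_) ((hs.indicator E).add (hs.indicator F))
  rw [← Set.indicator_union_add_inter_apply]
  exact le_add_of_nonneg_right (Set.indicator_nonneg (fun j _ => term_nonneg ht j) j)

lemma hasDensity_empty : P.HasDensity ∅ 0 := by
  have hzero : P.densityFn ∅ = fun _ => 0 := funext fun t => by simp [densityFn]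
  rw [HasDensity, hzero]
  exact tendsto_const_nhds

lemma HasDensity.zero_mono {E F : Set ℕ} (hEF : E ⊆ F) (hF : P.HasDensity F 0) :
    P.HasDensity E 0 :=
  tendsto_of_tendsto_of_tendsto_of_le_of_le' tendsto_const_nhds hF
    (P.eventually_nonneg_and_summable.mono fun _ ht => densityFn_nonneg E ht.1)
    (P.eventually_nonneg_and_summable.mono fun _ ht => densityFn_mono hEF ht.1 ht.2)

lemma HasDensity.zero_union {E F : Set ℕ} (hE : P.HasDensity E 0) (hF : P.HasDensity F 0) :
    P.HasDensity (E ∪ F) 0 := by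
  have hsum : Tendsto (fun t => P.densityFn E t + P.densityFn F t) P.limFilter (𝓝 0) := by
    simpa using hE.add hF
  exact tendsto_of_tendsto_of_tendsto_of_le_of_le' tendsto_const_nhds hsum
    (P.eventually_nonneg_and_summable.mono fun _ ht => densityFn_nonneg _ ht.1)
    (P.eventually_nonneg_and_summable.mono fun _ ht => densityFn_union_le E F ht.1 ht.2)

variable (P)

def statFilter : Filter ℕ where
  sets := {E | P.HasDensity Eᶜ 0}
  univ_sets := by simpa using hasDensity_empty
  sets_of_superset hE hEF := hE.zero_mono (Set.compl_subset_compl.2 hEF)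
  inter_sets hE hF := by simpa [Set.compl_inter] using hE.zero_union hF

variable {P}

theorem statTendsto_iff_tendsto_statFilter {x : ℕ → ℝ} {L : ℝ} :
    P.StatTendsto x L ↔ Tendsto x P.statFilter (𝓝 L) := by
  simp only [Metric.tendsto_nhds, Real.dist_eq, StatTendsto]
  refine forall₂_congr fun ε _ => ?_
  change _ ↔ P.HasDensity {j | |x j - L| < ε}ᶜ 0
  simp only [Set.compl_ofPred, not_lt]

end PowerSeriesMethod

lemma ContinuousMap.abs_map_sum_smul_apply_le {X ι : Type*} [TopologicalSpace X] [CompactSpace X]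
    (T : C(X, ℝ) →ₗ[ℝ] C(X, ℝ)) (s : Finset ι) (c : ι → ℝ) (ψ : ι → C(X, ℝ)) {x : X}
    (hx : ∑ l ∈ s, c l * ψ l x = 0) :
    |T (∑ l ∈ s, c l • ψ l) x| ≤ ∑ l ∈ s, |c l| * ‖T (ψ l) - ψ l‖ := by
  set f := ∑ l ∈ s, c l • ψ l
  have hfx : f x = 0 := by simpa [f] using hx
  calc |T f x| = |(T f - f) x| := by simp [hfx]
    _ ≤ ‖T f - f‖ := by simpa only [Real.norm_eq_abs] using (T f - f).norm_coe_le_norm x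
    _ = ‖∑ l ∈ s, c l • (T (ψ l) - ψ l)‖ := by
        simp only [f, map_sum, map_smul, smul_sub, Finset.sum_sub_distrib]
    _ ≤ ∑ l ∈ s, |c l| * ‖T (ψ l) - ψ l‖ := by
        simpa only [norm_smul, Real.norm_eq_abs] using norm_sum_le s fun l => c l • (T (ψ l) - ψ l)

theorem statTendsto_sup_T_Qx_general (P : PowerSeriesMethod)
    {X : Type*} [TopologicalSpace X] [CompactSpace X]
    (d : ℕ) (ψ g : Fin d → C(X, ℝ))
    (hQzero : ∀ x y : X, (∑ l, g l x * ψ l y) = 0 ↔ y = x)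
    (T : ℕ → C(X, ℝ) →ₗ[ℝ] C(X, ℝ))
    (hTconv : ∀ l, P.StatTendsto (fun j => ‖T j (ψ l) - ψ l‖) 0) :
    P.StatTendsto (fun j => ⨆ x : X, |T j (∑ l, g l x • ψ l) x|) 0 := by
  simp only [PowerSeriesMethod.statTendsto_iff_tendsto_statFilter] at hTconv ⊢
  have hbound : ∀ j, ⨆ x : X, |T j (∑ l, g l x • ψ l) x| ≤ ∑ l, ‖g l‖ * ‖T j (ψ l) - ψ l‖ := by
    intro j
    refine Real.iSup_le (fun x => ?_) (by positivity)
    calc |T j (∑ l, g l x • ψ l) x| ≤ ∑ l, |g l x| * ‖T j (ψ l) - ψ l‖ :=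
          ContinuousMap.abs_map_sum_smul_apply_le (T j) _ _ ψ ((hQzero x x).2 rfl)
      _ ≤ ∑ l, ‖g l‖ * ‖T j (ψ l) - ψ l‖ := by
          gcongr with l
          simpa only [Real.norm_eq_abs] using (g l).norm_coe_le_norm x
  have hlim : Tendsto (fun j => ∑ l, ‖g l‖ * ‖T j (ψ l) - ψ l‖) P.statFilter (𝓝 0) := by
    simpa using tendsto_finsetSum _ fun l _ => (hTconv l).const_mul ‖g l‖
  exact squeeze_zero (fun j => Real.iSup_nonneg fun x => abs_nonneg _) hbound hlim

/-- under the Korovkin test hypotheses,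
`st_P-lim (max_{x ∈ X} |T_j(Q_x)(x)|) = 0`, where `Q_x = ∑ g_λ(x) • ψ_λ`. -/
theorem statTendsto_sup_T_Qx (P : PowerSeriesMethod) (hP : P.Regular)
    {X : Type*} [TopologicalSpace X] [CompactSpace X] [T2Space X] [Nontrivial X]
    (d : ℕ) (ψ g : Fin d → C(X, ℝ))
    (hQpos : ∀ x y : X, 0 ≤ ∑ l, g l x * ψ l y)
    (hQzero : ∀ x y : X, (∑ l, g l x * ψ l y) = 0 ↔ y = x)
    (T : ℕ → C(X, ℝ) →ₗ[ℝ] C(X, ℝ))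
    (hTpos : ∀ j (f : C(X, ℝ)), 0 ≤ f → 0 ≤ T j f)
    (hTconv : ∀ l, P.StatTendsto (fun j => ‖T j (ψ l) - ψ l‖) 0) :
    P.StatTendsto (fun j => ⨆ x : X, |T j (∑ l, g l x • ψ l) x|) 0 :=
  statTendsto_sup_T_Qx_general P d ψ g hQzero T hTconv
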